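/- Let L, M, N be positive integers and let g_0, …, g_{L−1} ∈ ℓ²(ℤ²,ℍ) be real-valued. Then G(g,L,M,N) is a Parseval Gabor frame for ℓ²(ℤ²,ℍ) if and only if for every k ∈ {0,…,N−1}² and every p ∈ ℤ², ∑_{l=0}^{L−1} ∑_{n∈ℤ²} g_l(k−nN)·g_l(k+pM−nN) = (1/M²) if p = (0,0) and = 0 otherwise, where nN := (n₁N,n₂N) and pM := (p₁M,p₂M). -/

import Mathlib

noncomputable section

open scoped Real

/-- The real quaternions. -/
abbrev ℍ : Type := Quaternion ℝ

/-- `e_i θ = cos θ + (sin θ) i`. -/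
def eI (θ : ℝ) : ℍ := ⟨Real.cos θ, Real.sin θ, 0, 0⟩

/-- `e_j θ = cos θ + (sin θ) j`. -/
def eJ (θ : ℝ) : ℍ := ⟨Real.cos θ, 0, Real.sin θ, 0⟩

/-- Quaternionic pairing `⟨f,g⟩ = ∑ conj (f k) * g k`. -/
def qpair (f g : ℤ × ℤ → ℍ) : ℍ := ∑' k : ℤ × ℤ, star (f k) * g k

/-- Membership in `ℓ²(ℤ², ℍ)`. -/
def MemL2 (f : ℤ × ℤ → ℍ) : Prop := Summable fun k : ℤ × ℤ => ‖f k‖ ^ 2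

/-- `‖f‖² = ∑ |f k|²`. -/
def normSq2 (f : ℤ × ℤ → ℍ) : ℝ := ∑' k : ℤ × ℤ, ‖f k‖ ^ 2

/-- A window is real-valued if all its values lie in `ℝ ⊆ ℍ`. -/
def IsRealValued (f : ℤ × ℤ → ℍ) : Prop := ∀ k : ℤ × ℤ, f k = ((f k).re : ℍ)

/-- The Gabor atom `E_{m/M} T_{nN} w`. -/
def gaborAtom (M N : ℕ) (w : ℤ × ℤ → ℍ) (m : ℕ × ℕ) (n : ℤ × ℤ) : ℤ × ℤ → ℍ :=
  fun k =>
    eI (2 * π * (m.1 : ℝ) * (k.1 : ℝ) / (M : ℝ)) *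
      w (k.1 - n.1 * (N : ℤ), k.2 - n.2 * (N : ℤ)) *
      eJ (2 * π * (m.2 : ℝ) * (k.2 : ℝ) / (M : ℝ))

/-- The index square `{0, …, M-1}²`. -/
abbrev msq (M : ℕ) : Finset (ℕ × ℕ) := Finset.range M ×ˢ Finset.range M

/-- `k ∈ {0, …, N-1}²` inside `ℤ²`. -/
def InNsq (N : ℕ) (k : ℤ × ℤ) : Prop :=
  0 ≤ k.1 ∧ k.1 < (N : ℤ) ∧ 0 ≤ k.2 ∧ k.2 < (N : ℤ)

/-- `∑_{l<L} ∑_{n∈ℤ²} ∑_{m∈{0,…,M-1}²} |⟨E_{m/M}T_{nN}g_l, h⟩|²`. -/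
def frameSum (L M N : ℕ) (g : ℕ → ℤ × ℤ → ℍ) (h : ℤ × ℤ → ℍ) : ℝ :=
  ∑ l ∈ Finset.range L, ∑' n : ℤ × ℤ, ∑ m ∈ msq M,
    ‖qpair (gaborAtom M N (g l) m n) h‖ ^ 2

/-- Bessel system with bound `B`. -/
def IsBessel (L M N : ℕ) (g : ℕ → ℤ × ℤ → ℍ) (B : ℝ) : Prop :=
  ∀ h : ℤ × ℤ → ℍ, MemL2 h → frameSum L M N g h ≤ B * normSq2 h

/-- Frame with bounds `A ≤ B`. -/
def IsFrame (L M N : ℕ) (g : ℕ → ℤ × ℤ → ℍ) (A B : ℝ) : Prop :=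
  ∀ h : ℤ × ℤ → ℍ, MemL2 h →
    A * normSq2 h ≤ frameSum L M N g h ∧ frameSum L M N g h ≤ B * normSq2 h

/-- Parseval frame. -/
def IsParseval (L M N : ℕ) (g : ℕ → ℤ × ℤ → ℍ) : Prop :=
  ∀ h : ℤ × ℤ → ℍ, MemL2 h → frameSum L M N g h = normSq2 h

/-- Orthonormal system. -/
def IsON (L M N : ℕ) (g : ℕ → ℤ × ℤ → ℍ) : Prop :=
  ∀ l l' : ℕ, l < L → l' < L → ∀ m ∈ msq M, ∀ m' ∈ msq M, ∀ n n' : ℤ × ℤ,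
    qpair (gaborAtom M N (g l) m n) (gaborAtom M N (g l') m' n') =
      if l = l' ∧ m = m' ∧ n = n' then 1 else 0

/-- `G(k,p) = ∑_{l<L} ∑_{n∈ℤ²} g_l(k-nN) g_l(k+pM-nN)`. -/
def gaborG (L M N : ℕ) (g : ℕ → ℤ × ℤ → ℍ) (k p : ℤ × ℤ) : ℍ :=
  ∑ l ∈ Finset.range L, ∑' n : ℤ × ℤ,
    g l (k.1 - n.1 * (N : ℤ), k.2 - n.2 * (N : ℤ)) *
      g l (k.1 + p.1 * (M : ℤ) - n.1 * (N : ℤ), k.2 + p.2 * (M : ℤ) - n.2 * (N : ℤ))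

/-- Mixed version: `∑_{l<L} ∑_{n∈ℤ²} g_l(k-nN) h_l(k+pM-nN)`. -/
def gaborGmix (L M N : ℕ) (g h : ℕ → ℤ × ℤ → ℍ) (k p : ℤ × ℤ) : ℍ :=
  ∑ l ∈ Finset.range L, ∑' n : ℤ × ℤ,
    g l (k.1 - n.1 * (N : ℤ), k.2 - n.2 * (N : ℤ)) *
      h l (k.1 + p.1 * (M : ℤ) - n.1 * (N : ℤ), k.2 + p.2 * (M : ℤ) - n.2 * (N : ℤ))

/-- `∑_{l<L} ∑_{n∈ℤ²} |g_l(k-nN)|²`. -/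
def winSum (L N : ℕ) (g : ℕ → ℤ × ℤ → ℍ) (k : ℤ × ℤ) : ℝ :=
  ∑ l ∈ Finset.range L, ∑' n : ℤ × ℤ,
    ‖g l (k.1 - n.1 * (N : ℤ), k.2 - n.2 * (N : ℤ))‖ ^ 2

/-- Support of diameter `< M` in every row and every column. -/
def DiamLt (M : ℕ) (f : ℤ × ℤ → ℍ) : Prop :=
  (∀ k₂ k₁ k₁' : ℤ, f (k₁, k₂) ≠ 0 → f (k₁', k₂) ≠ 0 → |k₁ - k₁'| < (M : ℤ)) ∧
  (∀ k₁ k₂ k₂' : ℤ, f (k₁, k₂) ≠ 0 → f (k₁, k₂') ≠ 0 → |k₂ - k₂'| < (M : ℤ))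

/-- `M`-periodicity. -/
def MPeriodic (M : ℕ) (f : ℤ × ℤ → ℍ) : Prop :=
  ∀ k : ℤ × ℤ, f (k.1 + (M : ℤ), k.2) = f k ∧ f (k.1, k.2 + (M : ℤ)) = f k

/-- Duality of two Gabor systems (on finitely supported sequences). -/
def AreDual (L M N : ℕ) (g h : ℕ → ℤ × ℤ → ℍ) : Prop :=
  ∀ f φ : ℤ × ℤ → ℍ, (Function.support f).Finite → (Function.support φ).Finite →
    (∑ l ∈ Finset.range L, ∑' n : ℤ × ℤ, ∑ m ∈ msq M,
      qpair f (gaborAtom M N (g l) m n) * qpair (gaborAtom M N (h l) m n) φ)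
      = qpair f φ

/-!
For a real window the Gabor atom is `w (k - nN)` times the unimodular phase
`eI (2π m₁ k₁ / M) * eJ (2π m₂ k₂ / M)`, and `∑ₘ phase m k' * star (phase m k)` over
`m ∈ {0,…,M-1}²` equals `M²` if `k ≡ k' (mod M)` and `0` otherwise: this is the orthogonality
of the characters of `ℤ/M`, carried into `ℍ` by the two embeddings `ℂ → ℍ` sending `I` to `i`
and to `j`. Hence, for finitely supported `h`,
`frameSum h = M² ∑_{k ≡ k'} corr k k' * Re (h k * conj (h k'))` with the real correlation
`corr k k' = ∑ₗ ∑ₙ gₗ(k - nN) gₗ(k' - nN)`. Testing the Parseval identity on `δ_k` and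
`δ_k + δ_k'` gives `corr k k' = M⁻² [k = k']` for `k ≡ k'`, and conversely these values turn the
quadratic form into `∑ ‖h k‖²`. Since `corr` is invariant under simultaneous translation by
`Nℤ²`, it suffices to know it for `k ∈ {0,…,N-1}²`, which is the stated condition.

The identity passes from finitely supported sequences to all of `ℓ²`: applied to truncations it
gives the Bessel bound by a limit argument, and the reverse inequality comes from
`‖a - b‖² ≤ (1 + ε) ‖a‖² + (1 + ε⁻¹) ‖b‖²` applied coefficientwise to `h` minus its tail.
-/

open Finset

lemma Complex.sum_range_exp_eq_ite {M : ℕ} (hM : M ≠ 0) (d : ℤ) :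
    ∑ m ∈ range M, exp (↑(2 * π * m * d / M) * I) = if (M : ℤ) ∣ d then (M : ℂ) else 0 := by
  set ζ := exp (2 * π * I / M)
  have hζ : IsPrimitiveRoot ζ M := isPrimitiveRoot_exp M hM
  have hpow (m : ℕ) : exp (↑(2 * π * m * d / M) * I) = (ζ ^ d) ^ m := by
    rw [← zpow_natCast, ← zpow_mul, ← exp_int_mul]
    congr 1
    push_cast
    ring
  simp_rw [hpow]
  split_ifs with hd
  · simp [(hζ.zpow_eq_one_iff_dvd d).mpr hd]
  · have hne : ζ ^ d ≠ 1 := fun h => hd ((hζ.zpow_eq_one_iff_dvd d).mp h)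
    rw [geom_sum_eq hne, ← zpow_natCast, ← zpow_mul, mul_comm, zpow_mul, zpow_natCast,
      hζ.pow_eq_one, one_zpow, sub_self, zero_div]

lemma Quaternion.re_mul_comm (a b : ℍ) : (a * b).re = (b * a).re := by
  simp only [Quaternion.re_mul]
  ring

lemma Quaternion.re_sum {ι : Type*} (s : Finset ι) (f : ι → ℍ) :
    (∑ i ∈ s, f i).re = ∑ i ∈ s, (f i).re :=
  map_sum (QuaternionAlgebra.reₗ _ _ _) f s

lemma Quaternion.coe_finsetSum {ι : Type*} (s : Finset ι) (f : ι → ℝ) :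
    ((∑ i ∈ s, f i : ℝ) : ℍ) = ∑ i ∈ s, (f i : ℍ) :=
  map_sum (algebraMap ℝ ℍ) f s

lemma Quaternion.norm_sum_star_mul_sq {ι : Type*} (S : Finset ι) (a c : ι → ℍ) :
    ‖∑ k ∈ S, star (a k) * c k‖ ^ 2
      = ∑ k ∈ S, ∑ k' ∈ S, (a k' * star (a k) * (c k * star (c k'))).re := by
  rw [← real_inner_self_eq_norm_sq, sum_inner]
  refine sum_congr rfl fun k _ => ?_
  rw [inner_sum]
  refine sum_congr rfl fun k' _ => ?_
  rw [Quaternion.inner_def, star_mul, star_star, ← mul_assoc, Quaternion.re_mul_comm]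
  simp only [mul_assoc]

section Characters

open scoped Quaternion

def quatI : ℍ := ⟨0, 1, 0, 0⟩

def quatJ : ℍ := ⟨0, 0, 1, 0⟩

lemma quatI_mul_self : quatI * quatI = -1 := by
  ext <;> simp only [Quaternion.re_mul, Quaternion.imI_mul, Quaternion.imJ_mul,
    Quaternion.imK_mul] <;> simp [quatI]

lemma quatJ_mul_self : quatJ * quatJ = -1 := by
  ext <;> simp only [Quaternion.re_mul, Quaternion.imI_mul, Quaternion.imJ_mul,
    Quaternion.imK_mul] <;> simp [quatJ]

lemma eI_eq_liftAux (θ : ℝ) :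
    eI θ = Complex.liftAux quatI quatI_mul_self (Complex.exp (θ * Complex.I)) := by
  rw [Complex.liftAux_apply, Quaternion.algebraMap_def]
  ext <;> simp only [Quaternion.re_add, Quaternion.imI_add, Quaternion.imJ_add,
    Quaternion.imK_add, Quaternion.re_smul, Quaternion.imI_smul, Quaternion.imJ_smul,
    Quaternion.imK_smul] <;> simp [eI, quatI, Complex.exp_ofReal_mul_I_re,
    Complex.exp_ofReal_mul_I_im]

lemma eJ_eq_liftAux (θ : ℝ) :
    eJ θ = Complex.liftAux quatJ quatJ_mul_self (Complex.exp (θ * Complex.I)) := by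
  rw [Complex.liftAux_apply, Quaternion.algebraMap_def]
  ext <;> simp only [Quaternion.re_add, Quaternion.imI_add, Quaternion.imJ_add,
    Quaternion.imK_add, Quaternion.re_smul, Quaternion.imI_smul, Quaternion.imJ_smul,
    Quaternion.imK_smul] <;> simp [eJ, quatJ, Complex.exp_ofReal_mul_I_re,
    Complex.exp_ofReal_mul_I_im]

lemma eI_add (a b : ℝ) : eI (a + b) = eI a * eI b := by
  rw [eI_eq_liftAux, eI_eq_liftAux, eI_eq_liftAux, ← map_mul, ← Complex.exp_add]
  push_cast
  ring_nf

lemma eJ_add (a b : ℝ) : eJ (a + b) = eJ a * eJ b := by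
  rw [eJ_eq_liftAux, eJ_eq_liftAux, eJ_eq_liftAux, ← map_mul, ← Complex.exp_add]
  push_cast
  ring_nf

lemma star_eI (θ : ℝ) : star (eI θ) = eI (-θ) := by
  ext <;> simp only [Quaternion.re_star, Quaternion.imI_star, Quaternion.imJ_star,
    Quaternion.imK_star] <;> simp [eI]

lemma star_eJ (θ : ℝ) : star (eJ θ) = eJ (-θ) := by
  ext <;> simp only [Quaternion.re_star, Quaternion.imI_star, Quaternion.imJ_star,
    Quaternion.imK_star] <;> simp [eJ]

lemma norm_eI (θ : ℝ) : ‖eI θ‖ = 1 := by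
  have h : ‖eI θ‖ * ‖eI θ‖ = 1 := by
    rw [← Quaternion.normSq_eq_norm_mul_self, Quaternion.normSq_def']
    simp [eI]
  exact (mul_self_eq_one_iff.mp h).resolve_right (by linarith [norm_nonneg (eI θ)])

lemma norm_eJ (θ : ℝ) : ‖eJ θ‖ = 1 := by
  have h : ‖eJ θ‖ * ‖eJ θ‖ = 1 := by
    rw [← Quaternion.normSq_eq_norm_mul_self, Quaternion.normSq_def']
    simp [eJ]
  exact (mul_self_eq_one_iff.mp h).resolve_right (by linarith [norm_nonneg (eJ θ)])

lemma sum_range_eI {M : ℕ} (hM : M ≠ 0) (d : ℤ) :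
    ∑ m ∈ range M, eI (2 * π * m * d / M) = if (M : ℤ) ∣ d then (M : ℍ) else 0 := by
  simp only [eI_eq_liftAux]
  rw [← map_sum, Complex.sum_range_exp_eq_ite hM]
  split_ifs <;> simp

lemma sum_range_eJ {M : ℕ} (hM : M ≠ 0) (d : ℤ) :
    ∑ m ∈ range M, eJ (2 * π * m * d / M) = if (M : ℤ) ∣ d then (M : ℍ) else 0 := by
  simp only [eJ_eq_liftAux]
  rw [← map_sum, Complex.sum_range_exp_eq_ite hM]
  split_ifs <;> simp

end Characters

section Phase

def phase (M : ℕ) (m : ℕ × ℕ) (k : ℤ × ℤ) : ℍ :=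
  eI (2 * π * m.1 * k.1 / M) * eJ (2 * π * m.2 * k.2 / M)

-- Products in `ℤ × ℤ` are componentwise, so `k - n * N` is definitionally the
-- `(k.1 - n.1 * N, k.2 - n.2 * N)` of the definitions above.
lemma gaborAtom_eq_re_mul_phase {M N : ℕ} {w : ℤ × ℤ → ℍ} (hw : IsRealValued w) (m : ℕ × ℕ)
    (n k : ℤ × ℤ) : gaborAtom M N w m n k = ((w (k - n * N)).re : ℍ) * phase M m k := by
  change eI _ * w (k - n * N) * eJ _ = _
  conv_lhs => rw [hw (k - n * N)]
  rw [phase, ← Quaternion.coe_commutes, mul_assoc]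

lemma sum_phase_mul_star_phase {M : ℕ} (hM : M ≠ 0) (k k' : ℤ × ℤ) :
    ∑ m ∈ msq M, phase M m k' * star (phase M m k)
      = if k.1 ≡ k'.1 [ZMOD M] ∧ k.2 ≡ k'.2 [ZMOD M] then (((M : ℝ) ^ 2 : ℝ) : ℍ) else 0 := by
  have hterm (m : ℕ × ℕ) : phase M m k' * star (phase M m k)
      = eI (2 * π * m.1 * k'.1 / M) * eJ (2 * π * m.2 * (k'.2 - k.2 : ℤ) / M)
          * eI (-(2 * π * m.1 * k.1 / M)) := by
    rw [phase, phase, star_mul, star_eI, star_eJ, mul_assoc (eI _), ← mul_assoc (eJ _),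
      ← eJ_add, ← mul_assoc]
    congr 3
    push_cast
    ring
  simp_rw [hterm, sum_product, ← sum_mul, ← mul_sum, sum_range_eJ hM, Int.modEq_iff_dvd]
  by_cases h2 : (M : ℤ) ∣ k'.2 - k.2
  · have hx (x : ℕ) : eI (2 * π * x * k'.1 / M) * (M : ℍ) * eI (-(2 * π * x * k.1 / M))
        = M * eI (2 * π * x * (k'.1 - k.1 : ℤ) / M) := by
      rw [← Nat.cast_comm, mul_assoc, ← eI_add]
      congr 2
      push_cast
      ring
    simp only [h2, if_true, and_true, hx, ← mul_sum, sum_range_eI hM]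
    split_ifs <;> simp [sq, Quaternion.coe_natCast]
  · simp [h2]

def gaborEnergy (M N : ℕ) (w h : ℤ × ℤ → ℍ) (n : ℤ × ℤ) : ℝ :=
  ∑ m ∈ msq M, ‖qpair (gaborAtom M N w m n) h‖ ^ 2

lemma frameSum_eq_sum_tsum_gaborEnergy (L M N : ℕ) (g : ℕ → ℤ × ℤ → ℍ) (h : ℤ × ℤ → ℍ) :
    frameSum L M N g h = ∑ l ∈ range L, ∑' n, gaborEnergy M N (g l) h n :=
  rfl

lemma qpair_gaborAtom_eq_sum {M N : ℕ} {w h : ℤ × ℤ → ℍ} (hw : IsRealValued w) {S : Finset (ℤ × ℤ)}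
    (hS : Function.support h ⊆ S) (m : ℕ × ℕ) (n : ℤ × ℤ) :
    qpair (gaborAtom M N w m n) h = ∑ k ∈ S, star (phase M m k) * ((w (k - n * N)).re * h k) := by
  rw [qpair, tsum_eq_sum' ((Function.support_mul_subset_right _ _).trans hS)]
  refine sum_congr rfl fun k _ => ?_
  rw [gaborAtom_eq_re_mul_phase hw, star_mul, Quaternion.star_coe, mul_assoc]

lemma gaborEnergy_eq_of_support_subset {M : ℕ} (hM : M ≠ 0) (N : ℕ) {w h : ℤ × ℤ → ℍ}
    (hw : IsRealValued w) {S : Finset (ℤ × ℤ)} (hS : Function.support h ⊆ S) (n : ℤ × ℤ) :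
    gaborEnergy M N w h n = M ^ 2 * ∑ k ∈ S, ∑ k' ∈ S, (w (k - n * N)).re * (w (k' - n * N)).re *
      if k.1 ≡ k'.1 [ZMOD M] ∧ k.2 ≡ k'.2 [ZMOD M] then (h k * star (h k')).re else 0 := by
  simp_rw [gaborEnergy, qpair_gaborAtom_eq_sum hw hS, Quaternion.norm_sum_star_mul_sq]
  rw [sum_comm, mul_sum]
  refine sum_congr rfl fun k _ => ?_
  rw [sum_comm, mul_sum]
  refine sum_congr rfl fun k' _ => ?_
  rw [← Quaternion.re_sum, ← sum_mul, sum_phase_mul_star_phase hM]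
  split_ifs
  · rw [star_mul, Quaternion.star_coe]
    simp only [Quaternion.coe_mul_eq_smul, Quaternion.mul_coe_eq_smul, smul_mul_assoc,
      mul_smul_comm, smul_smul, Quaternion.re_smul, smul_eq_mul]
    ring
  · rw [zero_mul, Quaternion.re_zero, mul_zero, mul_zero]

end Phase

section Correlation

lemma summable_mul_of_summable_norm_sq {ι R : Type*} [NormedRing R] [CompleteSpace R]
    {f g : ι → R} (hf : Summable fun i => ‖f i‖ ^ 2) (hg : Summable fun i => ‖g i‖ ^ 2) :
    Summable fun i => f i * g i :=
  ((hf.add hg).div_const 2).of_norm_bounded fun i =>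
    (norm_mul_le _ _).trans (by nlinarith [sq_nonneg (‖f i‖ - ‖g i‖)])

lemma injective_sub_mul_natCast {N : ℕ} (hN : N ≠ 0) (k : ℤ × ℤ) :
    Function.Injective fun n : ℤ × ℤ => k - n * N := by
  intro a b hab
  have hN' : (N : ℤ) ≠ 0 := Nat.cast_ne_zero.mpr hN
  simp only [sub_right_inj, Prod.ext_iff, Prod.fst_mul, Prod.snd_mul, Prod.fst_natCast,
    Prod.snd_natCast] at hab
  exact Prod.ext (mul_right_cancel₀ hN' hab.1) (mul_right_cancel₀ hN' hab.2)

lemma summable_re_mul_re_sub_mul {N : ℕ} (hN : N ≠ 0) {w : ℤ × ℤ → ℍ} (hw : MemL2 w)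
    (hwr : IsRealValued w) (k k' : ℤ × ℤ) :
    Summable fun n : ℤ × ℤ => (w (k - n * N)).re * (w (k' - n * N)).re := by
  have hsq (k : ℤ × ℤ) : Summable fun n : ℤ × ℤ => ‖(w (k - n * N)).re‖ ^ 2 := by
    refine (hw.comp_injective (injective_sub_mul_natCast hN k)).congr fun n => ?_
    simp only [Function.comp_apply]
    conv_lhs => rw [hwr]
    rw [Quaternion.norm_coe]
  exact summable_mul_of_summable_norm_sq (hsq k) (hsq k')

def corr (L N : ℕ) (g : ℕ → ℤ × ℤ → ℍ) (k k' : ℤ × ℤ) : ℝ :=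
  ∑ l ∈ range L, ∑' n : ℤ × ℤ, (g l (k - n * N)).re * (g l (k' - n * N)).re

lemma hasSum_gaborEnergy {M N : ℕ} (hM : M ≠ 0) (hN : N ≠ 0) {w h : ℤ × ℤ → ℍ} (hw : MemL2 w)
    (hwr : IsRealValued w) {S : Finset (ℤ × ℤ)} (hS : Function.support h ⊆ S) :
    HasSum (gaborEnergy M N w h) (M ^ 2 * ∑ k ∈ S, ∑ k' ∈ S,
      (∑' n : ℤ × ℤ, (w (k - n * N)).re * (w (k' - n * N)).re) *
        if k.1 ≡ k'.1 [ZMOD M] ∧ k.2 ≡ k'.2 [ZMOD M] then (h k * star (h k')).re else 0) := by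
  rw [funext (gaborEnergy_eq_of_support_subset hM N hwr hS)]
  exact (hasSum_sum fun k _ => hasSum_sum fun k' _ =>
    (summable_re_mul_re_sub_mul hN hw hwr k k').hasSum.mul_right _).mul_left _

lemma frameSum_eq_of_support_subset {L M N : ℕ} (hM : M ≠ 0) (hN : N ≠ 0)
    {g : ℕ → ℤ × ℤ → ℍ} (hg : ∀ l < L, MemL2 (g l)) (hreal : ∀ l < L, IsRealValued (g l))
    {h : ℤ × ℤ → ℍ} {S : Finset (ℤ × ℤ)} (hS : Function.support h ⊆ S) :
    frameSum L M N g h = M ^ 2 * ∑ k ∈ S, ∑ k' ∈ S, corr L N g k k' *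
      if k.1 ≡ k'.1 [ZMOD M] ∧ k.2 ≡ k'.2 [ZMOD M] then (h k * star (h k')).re else 0 := by
  rw [frameSum_eq_sum_tsum_gaborEnergy, sum_congr rfl fun l hl =>
    (hasSum_gaborEnergy hM hN (hg l (mem_range.mp hl)) (hreal l (mem_range.mp hl)) hS).tsum_eq,
    ← mul_sum, sum_comm]
  simp_rw [sum_comm (s := range L), ← sum_mul]
  rfl

end Correlation

section Extension

open Filter Topology

lemma memL2_indicator {h : ℤ × ℤ → ℍ} (hh : MemL2 h) (s : Set (ℤ × ℤ)) :
    MemL2 (s.indicator h) := by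
  refine (hh.indicator s).congr fun k => ?_
  by_cases hk : k ∈ s <;> simp [hk]

lemma normSq2_indicator_finset (h : ℤ × ℤ → ℍ) (T : Finset (ℤ × ℤ)) :
    normSq2 ((T : Set (ℤ × ℤ)).indicator h) = ∑ k ∈ T, ‖h k‖ ^ 2 := by
  rw [normSq2, tsum_eq_sum (s := T) fun k hk => by simp [hk]]
  exact sum_congr rfl fun k hk => by simp [hk]

lemma normSq2_indicator_add_compl {h : ℤ × ℤ → ℍ} (hh : MemL2 h) (s : Set (ℤ × ℤ)) :
    normSq2 (s.indicator h) + normSq2 (sᶜ.indicator h) = normSq2 h := by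
  rw [normSq2, normSq2, normSq2, ← (memL2_indicator hh s).tsum_add (memL2_indicator hh sᶜ)]
  refine tsum_congr fun k => ?_
  by_cases hk : k ∈ s <;> simp [hk]

lemma summable_star_mul {f h : ℤ × ℤ → ℍ} (hf : MemL2 f) (hh : MemL2 h) :
    Summable fun k => star (f k) * h k :=
  summable_mul_of_summable_norm_sq (by simp only [norm_star]; exact hf) hh

lemma qpair_sub {f u v : ℤ × ℤ → ℍ} (hf : MemL2 f) (hu : MemL2 u) (hv : MemL2 v) :
    qpair f (u - v) = qpair f u - qpair f v := by
  rw [qpair, qpair, qpair, ← (summable_star_mul hf hu).tsum_sub (summable_star_mul hf hv)]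
  exact tsum_congr fun k => mul_sub _ _ _

lemma tendsto_qpair_indicator {f h : ℤ × ℤ → ℍ} (hf : MemL2 f) (hh : MemL2 h) :
    Tendsto (fun T : Finset (ℤ × ℤ) => qpair f ((T : Set (ℤ × ℤ)).indicator h)) atTop
      (𝓝 (qpair f h)) := by
  have hT (T : Finset (ℤ × ℤ)) :
      qpair f ((T : Set (ℤ × ℤ)).indicator h) = ∑ k ∈ T, star (f k) * h k := by
    rw [qpair, tsum_eq_sum (s := T) fun k hk => by simp [hk]]
    exact sum_congr rfl fun k hk => by simp [hk]
  simp_rw [hT]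
  exact (summable_star_mul hf hh).hasSum

lemma memL2_gaborAtom {M N : ℕ} {w : ℤ × ℤ → ℍ} (hw : MemL2 w) (m : ℕ × ℕ) (n : ℤ × ℤ) :
    MemL2 (gaborAtom M N w m n) := by
  refine ((Equiv.subRight (n * N)).summable_iff.mpr hw).congr fun k => ?_
  simp only [Function.comp_apply, Equiv.subRight_apply, gaborAtom, norm_mul, norm_eI, norm_eJ,
    one_mul, mul_one]
  rfl

lemma norm_sub_sq_le {E : Type*} [SeminormedAddCommGroup E] {ε : ℝ} (hε : 0 < ε) (a b : E) :
    ‖a - b‖ ^ 2 ≤ (1 + ε) * ‖a‖ ^ 2 + (1 + ε⁻¹) * ‖b‖ ^ 2 := by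
  have hab : 2 * ‖a‖ * ‖b‖ ≤ ε * ‖a‖ ^ 2 + ε⁻¹ * ‖b‖ ^ 2 := by
    have := sq_nonneg (ε * ‖a‖ - ‖b‖)
    have hεinv : ε * ε⁻¹ = 1 := mul_inv_cancel₀ hε.ne'
    nlinarith [inv_pos.mpr hε]
  nlinarith [norm_sub_le a b, norm_nonneg (a - b), norm_nonneg a, norm_nonneg b]

lemma MemL2.sub {h r : ℤ × ℤ → ℍ} (hh : MemL2 h) (hr : MemL2 r) : MemL2 (h - r) :=
  Summable.of_nonneg_of_le (fun k => sq_nonneg _)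
    (fun k => by simpa [one_add_one_eq_two] using norm_sub_sq_le one_pos (h k) (r k))
    ((hh.mul_left 2).add (hr.mul_left 2))

lemma gaborEnergy_sub_le {M N : ℕ} {w h r : ℤ × ℤ → ℍ} (hw : MemL2 w) (hh : MemL2 h)
    (hr : MemL2 r) {ε : ℝ} (hε : 0 < ε) (n : ℤ × ℤ) :
    gaborEnergy M N w (h - r) n
      ≤ (1 + ε) * gaborEnergy M N w h n + (1 + ε⁻¹) * gaborEnergy M N w r n := by
  rw [gaborEnergy, gaborEnergy, gaborEnergy, mul_sum, mul_sum, ← sum_add_distrib]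
  refine sum_le_sum fun m _ => ?_
  rw [qpair_sub (memL2_gaborAtom hw m n) hh hr]
  exact norm_sub_sq_le hε _ _

variable {L M N : ℕ} {g : ℕ → ℤ × ℤ → ℍ} (hg : ∀ l < L, MemL2 (g l))
  (hfin : ∀ (u : ℤ × ℤ → ℍ) (S : Finset (ℤ × ℤ)), Function.support u ⊆ S →
    (∀ l < L, Summable (gaborEnergy M N (g l) u)) ∧ frameSum L M N g u = normSq2 u)
include hg hfin

lemma summable_gaborEnergy_and_frameSum_le {h : ℤ × ℤ → ℍ} (hh : MemL2 h) :
    (∀ l < L, Summable (gaborEnergy M N (g l) h)) ∧ frameSum L M N g h ≤ normSq2 h := by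
  have hpartial (F : Finset (ℤ × ℤ)) :
      ∑ l ∈ range L, ∑ n ∈ F, gaborEnergy M N (g l) h n ≤ normSq2 h := by
    have hlim : Tendsto (fun T : Finset (ℤ × ℤ) => ∑ l ∈ range L, ∑ n ∈ F,
        gaborEnergy M N (g l) ((T : Set (ℤ × ℤ)).indicator h) n) atTop
        (𝓝 (∑ l ∈ range L, ∑ n ∈ F, gaborEnergy M N (g l) h n)) :=
      tendsto_finsetSum _ fun l hl => tendsto_finsetSum _ fun n _ => tendsto_finsetSum _
        fun m _ => ((tendsto_qpair_indicator (memL2_gaborAtom (hg l (mem_range.mp hl)) m n)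
          hh).norm.pow 2)
    refine le_of_tendsto' hlim fun T => ?_
    obtain ⟨hsum, heq⟩ := hfin _ T Set.support_indicator_subset
    calc ∑ l ∈ range L, ∑ n ∈ F, gaborEnergy M N (g l) ((T : Set (ℤ × ℤ)).indicator h) n
        ≤ frameSum L M N g ((T : Set (ℤ × ℤ)).indicator h) :=
          sum_le_sum fun l hl => (hsum l (mem_range.mp hl)).sum_le_tsum F fun n _ =>
            sum_nonneg fun m _ => sq_nonneg _
      _ = ∑ k ∈ T, ‖h k‖ ^ 2 := by rw [heq, normSq2_indicator_finset]
      _ ≤ normSq2 h := hh.sum_le_tsum T fun k _ => sq_nonneg _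
  have hsum (l : ℕ) (hl : l < L) : Summable (gaborEnergy M N (g l) h) :=
    summable_of_sum_le (fun n => sum_nonneg fun m _ => sq_nonneg _) fun F =>
      (single_le_sum (f := fun l => ∑ n ∈ F, gaborEnergy M N (g l) h n)
        (fun l _ => sum_nonneg fun n _ => sum_nonneg fun m _ => sq_nonneg _)
        (mem_range.mpr hl)).trans (hpartial F)
  refine ⟨hsum, ?_⟩
  rw [frameSum_eq_sum_tsum_gaborEnergy,
    ← Summable.tsum_finsetSum fun l hl => hsum l (mem_range.mp hl)]
  refine (summable_sum fun l hl => hsum l (mem_range.mp hl)).tsum_le_of_sum_le fun F => ?_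
  rw [sum_comm]
  exact hpartial F

lemma frameSum_sub_le {h r : ℤ × ℤ → ℍ} (hh : MemL2 h) (hr : MemL2 r) {ε : ℝ} (hε : 0 < ε) :
    frameSum L M N g (h - r) ≤ (1 + ε) * frameSum L M N g h + (1 + ε⁻¹) * frameSum L M N g r := by
  have hsum {v : ℤ × ℤ → ℍ} (hv : MemL2 v) (l : ℕ) (hl : l ∈ range L) :=
    (summable_gaborEnergy_and_frameSum_le hg hfin hv).1 l (mem_range.mp hl)
  simp only [frameSum_eq_sum_tsum_gaborEnergy, mul_sum, ← sum_add_distrib]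
  refine sum_le_sum fun l hl => ?_
  rw [← tsum_mul_left, ← tsum_mul_left,
    ← ((hsum hh l hl).mul_left _).tsum_add ((hsum hr l hl).mul_left _)]
  exact (hsum (hh.sub hr) l hl).tsum_le_tsum
    (fun n => gaborEnergy_sub_le (hg l (mem_range.mp hl)) hh hr hε n)
    (((hsum hh l hl).mul_left _).add ((hsum hr l hl).mul_left _))

lemma normSq2_le_one_add_mul_frameSum {h : ℤ × ℤ → ℍ} (hh : MemL2 h) {ε : ℝ} (hε : 0 < ε) :
    normSq2 h ≤ (1 + ε) * frameSum L M N g h := by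
  have hT (T : Finset (ℤ × ℤ)) :
      ∑ k ∈ T, ‖h k‖ ^ 2 - (1 + ε⁻¹) * (normSq2 h - ∑ k ∈ T, ‖h k‖ ^ 2)
        ≤ (1 + ε) * frameSum L M N g h := by
    set r := (T : Set (ℤ × ℤ))ᶜ.indicator h
    have hr : MemL2 r := memL2_indicator hh _
    have hu : h - r = (T : Set (ℤ × ℤ)).indicator h := by
      rw [sub_eq_iff_eq_add, Set.indicator_self_add_compl]
    have hnr : normSq2 r = normSq2 h - ∑ k ∈ T, ‖h k‖ ^ 2 := by
      rw [← normSq2_indicator_add_compl hh T, normSq2_indicator_finset]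
      ring
    have key : ∑ k ∈ T, ‖h k‖ ^ 2
        ≤ (1 + ε) * frameSum L M N g h + (1 + ε⁻¹) * normSq2 r :=
      calc ∑ k ∈ T, ‖h k‖ ^ 2 = frameSum L M N g (h - r) := by
            rw [(hfin (h - r) T (hu ▸ Set.support_indicator_subset)).2, hu,
              normSq2_indicator_finset]
        _ ≤ (1 + ε) * frameSum L M N g h + (1 + ε⁻¹) * frameSum L M N g r :=
            frameSum_sub_le hg hfin hh hr hε
        _ ≤ (1 + ε) * frameSum L M N g h + (1 + ε⁻¹) * normSq2 r := by
            gcongr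
            exact (summable_gaborEnergy_and_frameSum_le hg hfin hr).2
    rw [hnr] at key
    linarith
  have hS : Tendsto (fun T : Finset (ℤ × ℤ) => ∑ k ∈ T, ‖h k‖ ^ 2) atTop (𝓝 (normSq2 h)) :=
    hh.hasSum
  have hlim := hS.sub (((tendsto_const_nhds (x := normSq2 h)).sub hS).const_mul (1 + ε⁻¹))
  rw [sub_self, mul_zero, sub_zero] at hlim
  exact le_of_tendsto' hlim hT

lemma isParseval_of_finite_support : IsParseval L M N g := by
  intro h hh
  refine le_antisymm (summable_gaborEnergy_and_frameSum_le hg hfin hh).2 ?_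
  have hlim : Tendsto (fun ε : ℝ => (1 + ε) * frameSum L M N g h) (𝓝[>] 0)
      (𝓝 (frameSum L M N g h)) := by
    have : Continuous fun ε : ℝ => (1 + ε) * frameSum L M N g h := by fun_prop
    simpa using (this.tendsto 0).mono_left nhdsWithin_le_nhds
  exact ge_of_tendsto hlim (eventually_nhdsWithin_of_forall fun ε hε =>
    normSq2_le_one_add_mul_frameSum hg hfin hh hε)

end Extension

section Conditions

variable {L M N : ℕ} {g : ℕ → ℤ × ℤ → ℍ}

lemma corr_comm (k k' : ℤ × ℤ) : corr L N g k k' = corr L N g k' k :=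
  sum_congr rfl fun _ _ => tsum_congr fun _ => mul_comm _ _

lemma corr_add_mul_natCast (k k' q : ℤ × ℤ) :
    corr L N g (k + q * N) (k' + q * N) = corr L N g k k' := by
  refine sum_congr rfl fun l _ => ?_
  rw [← (Equiv.addRight q).tsum_eq]
  refine tsum_congr fun n => ?_
  have hx (x : ℤ × ℤ) : x + q * N - (n + q) * N = x - n * N := by ring
  simp only [Equiv.coe_addRight, hx]

lemma gaborG_eq_corr (hreal : ∀ l < L, IsRealValued (g l)) (k p : ℤ × ℤ) :
    gaborG L M N g k p = (corr L N g k (k + p * M) : ℍ) := by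
  rw [corr, Quaternion.coe_finsetSum]
  refine sum_congr rfl fun l hl => ?_
  rw [← Quaternion.tsum_coe]
  refine tsum_congr fun n => ?_
  rw [Quaternion.coe_mul, ← hreal l (mem_range.mp hl), ← hreal l (mem_range.mp hl)]
  rfl

lemma modEq_and_modEq_iff_exists {M : ℕ} {k k' : ℤ × ℤ} :
    k.1 ≡ k'.1 [ZMOD M] ∧ k.2 ≡ k'.2 [ZMOD M] ↔ ∃ p : ℤ × ℤ, k' = k + p * M := by
  simp only [Int.modEq_iff_dvd, dvd_iff_exists_eq_mul_right, Prod.ext_iff, Prod.fst_add,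
    Prod.snd_add, Prod.fst_mul, Prod.snd_mul, Prod.fst_natCast, Prod.snd_natCast]
  constructor
  · rintro ⟨⟨a, ha⟩, ⟨b, hb⟩⟩
    exact ⟨(a, b), by simp only; constructor <;> linarith⟩
  · rintro ⟨p, h1, h2⟩
    exact ⟨⟨p.1, by rw [h1]; ring⟩, ⟨p.2, by rw [h2]; ring⟩⟩

lemma mul_natCast_eq_zero_iff {M : ℕ} (hM : M ≠ 0) {p : ℤ × ℤ} : p * M = 0 ↔ p = 0 := by
  simp [Prod.ext_iff, hM]

lemma exists_inNsq_add_mul {N : ℕ} (hN : N ≠ 0) (k : ℤ × ℤ) :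
    ∃ k₀ q : ℤ × ℤ, InNsq N k₀ ∧ k = k₀ + q * N := by
  have hN' : (0 : ℤ) < N := by exact_mod_cast Nat.pos_of_ne_zero hN
  refine ⟨(k.1 % N, k.2 % N), (k.1 / N, k.2 / N), ⟨Int.emod_nonneg _ hN'.ne',
    Int.emod_lt_of_pos _ hN', Int.emod_nonneg _ hN'.ne', Int.emod_lt_of_pos _ hN'⟩, ?_⟩
  ext <;> simp <;> linarith [Int.emod_add_mul_ediv k.1 N, Int.emod_add_mul_ediv k.2 N]

lemma memL2_of_support_subset {h : ℤ × ℤ → ℍ} {S : Finset (ℤ × ℤ)}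
    (hS : Function.support h ⊆ S) : MemL2 h :=
  summable_of_ne_finset_zero fun k hk => by
    rw [Function.notMem_support.mp fun hk' => hk (hS hk'), norm_zero, sq, zero_mul]

variable (hM : M ≠ 0) (hN : N ≠ 0) (hg : ∀ l < L, MemL2 (g l))
  (hreal : ∀ l < L, IsRealValued (g l))
include hM hN hg hreal

lemma frameSum_indicator_one (S : Finset (ℤ × ℤ)) :
    frameSum L M N g ((S : Set (ℤ × ℤ)).indicator 1) = M ^ 2 * ∑ k ∈ S, ∑ k' ∈ S,
      corr L N g k k' * if k.1 ≡ k'.1 [ZMOD M] ∧ k.2 ≡ k'.2 [ZMOD M] then 1 else 0 := by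
  rw [frameSum_eq_of_support_subset hM hN hg hreal Set.support_indicator_subset]
  congr 1
  refine sum_congr rfl fun k hk => sum_congr rfl fun k' hk' => ?_
  simp [Set.indicator_of_mem (mem_coe.mpr hk), Set.indicator_of_mem (mem_coe.mpr hk'),
    Quaternion.re_one]

lemma corr_eq_of_isParseval (hpar : IsParseval L M N g) {k k' : ℤ × ℤ}
    (hkk' : k.1 ≡ k'.1 [ZMOD M] ∧ k.2 ≡ k'.2 [ZMOD M]) :
    corr L N g k k' = if k = k' then ((M : ℝ) ^ 2)⁻¹ else 0 := by
  have hM2 : (M : ℝ) ^ 2 ≠ 0 := by positivity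
  have htest (S : Finset (ℤ × ℤ)) := hpar _ (memL2_of_support_subset
    (Set.support_indicator_subset (s := (S : Set (ℤ × ℤ))) (f := 1)))
  have hdiag (j : ℤ × ℤ) : corr L N g j j = ((M : ℝ) ^ 2)⁻¹ := by
    have := htest {j}
    rw [frameSum_indicator_one hM hN hg hreal, normSq2_indicator_finset] at this
    simp only [sum_singleton, Int.ModEq.refl, and_self, if_true, mul_one, Pi.one_apply,
      norm_one, one_pow] at this
    exact eq_inv_of_mul_eq_one_right this
  split_ifs with h
  · rw [h, hdiag]
  · have := htest {k, k'}
    rw [frameSum_indicator_one hM hN hg hreal, normSq2_indicator_finset] at this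
    simp only [sum_pair h, hkk', hkk'.1.symm, hkk'.2.symm, Int.ModEq.refl, and_self, if_true,
      mul_one, Pi.one_apply, norm_one, one_pow, hdiag, corr_comm k' k] at this
    field_simp at this
    exact (mul_eq_zero.mp (by linarith : (M : ℝ) ^ 2 * corr L N g k k' = 0)).resolve_left hM2

lemma frameSum_eq_normSq2_of_corr
    (hcorr : ∀ k k', k.1 ≡ k'.1 [ZMOD M] ∧ k.2 ≡ k'.2 [ZMOD M] →
      corr L N g k k' = if k = k' then ((M : ℝ) ^ 2)⁻¹ else 0)
    {h : ℤ × ℤ → ℍ} {S : Finset (ℤ × ℤ)} (hS : Function.support h ⊆ S) :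
    frameSum L M N g h = normSq2 h := by
  have hterm (k k' : ℤ × ℤ) : (corr L N g k k' *
      if k.1 ≡ k'.1 [ZMOD M] ∧ k.2 ≡ k'.2 [ZMOD M] then (h k * star (h k')).re else 0)
      = if k = k' then ((M : ℝ) ^ 2)⁻¹ * ‖h k‖ ^ 2 else 0 := by
    split_ifs with hc hkk' hkk'
    · rw [hcorr k k' hc, if_pos hkk', hkk', ← Quaternion.inner_def, real_inner_self_eq_norm_sq]
    · rw [hcorr k k' hc, if_neg hkk', zero_mul]
    · exact absurd (hkk' ▸ ⟨Int.ModEq.refl _, Int.ModEq.refl _⟩) hc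
    · rw [mul_zero]
  have hM2 : (M : ℝ) ^ 2 ≠ 0 := by positivity
  rw [frameSum_eq_of_support_subset hM hN hg hreal hS, normSq2,
    tsum_eq_sum' fun k hk => hS (by simpa using hk)]
  simp_rw [hterm, sum_ite_eq, mul_sum]
  exact sum_congr rfl fun k hk => by rw [if_pos hk, mul_inv_cancel_left₀ hM2]

end Conditions

lemma gaborG_condition_iff {L M N : ℕ} (hM : M ≠ 0) (hN : N ≠ 0) {g : ℕ → ℤ × ℤ → ℍ}
    (hreal : ∀ l < L, IsRealValued (g l)) :
    (∀ k : ℤ × ℤ, InNsq N k → ∀ p : ℤ × ℤ,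
        gaborG L M N g k p = if p = 0 then ((M : ℍ) ^ 2)⁻¹ else 0) ↔
      ∀ k k' : ℤ × ℤ, k.1 ≡ k'.1 [ZMOD M] ∧ k.2 ≡ k'.2 [ZMOD M] →
        corr L N g k k' = if k = k' then ((M : ℝ) ^ 2)⁻¹ else 0 := by
  have hpoint (k p : ℤ × ℤ) : (gaborG L M N g k p = if p = 0 then ((M : ℍ) ^ 2)⁻¹ else 0) ↔
      corr L N g k (k + p * M) = if k = k + p * M then ((M : ℝ) ^ 2)⁻¹ else 0 := by
    have hcast : ((M : ℍ) ^ 2)⁻¹ = (((M : ℝ) ^ 2)⁻¹ : ℝ) := by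
      rw [Quaternion.coe_inv, Quaternion.coe_pow, Quaternion.coe_natCast]
    simp only [gaborG_eq_corr hreal, left_eq_add, mul_natCast_eq_zero_iff hM, hcast]
    split_ifs <;> simp only [← Quaternion.coe_zero, Quaternion.coe_inj]
  simp_rw [modEq_and_modEq_iff_exists]
  constructor
  · rintro hG k _ ⟨p, rfl⟩
    obtain ⟨k₀, q, hk₀, rfl⟩ := exists_inNsq_add_mul hN k
    rw [add_right_comm, corr_add_mul_natCast]
    simp only [add_left_inj]
    exact (hpoint k₀ p).mp (hG k₀ hk₀ p)
  · exact fun hC k _ p => (hpoint k p).mpr (hC k _ ⟨p, rfl⟩)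

theorem stmt_10_general (L M N : ℕ) (hM : 0 < M) (hN : 0 < N)
    (g : ℕ → ℤ × ℤ → ℍ) (hg : ∀ l < L, MemL2 (g l))
    (hreal : ∀ l < L, IsRealValued (g l)) :
    IsParseval L M N g ↔
      ∀ k : ℤ × ℤ, InNsq N k → ∀ p : ℤ × ℤ,
        gaborG L M N g k p =
          if p = 0 then (((M : ℍ)) ^ 2)⁻¹ else 0 := by
  rw [gaborG_condition_iff hM.ne' hN.ne' hreal]
  refine ⟨fun hpar k k' => corr_eq_of_isParseval hM.ne' hN.ne' hg hreal hpar, fun hcorr => ?_⟩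
  exact isParseval_of_finite_support hg fun u S hS =>
    ⟨fun l hl => (hasSum_gaborEnergy hM.ne' hN.ne' (hg l hl) (hreal l hl) hS).summable,
      frameSum_eq_normSq2_of_corr hM.ne' hN.ne' hg hreal hcorr hS⟩

/-- characterization of Parseval frames with real-valued windows. -/
theorem stmt_10 (L M N : ℕ) (hL : 0 < L) (hM : 0 < M) (hN : 0 < N)
    (g : ℕ → ℤ × ℤ → ℍ) (hg : ∀ l < L, MemL2 (g l))
    (hreal : ∀ l < L, IsRealValued (g l)) :
    IsParseval L M N g ↔
      ∀ k : ℤ × ℤ, InNsq N k → ∀ p : ℤ × ℤ,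
        gaborG L M N g k p =
          if p = 0 then (((M : ℍ)) ^ 2)⁻¹ else 0 :=
  stmt_10_general L M N hM hN g hg hreal
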